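/- arXiv:1606.06939 — 2 statements merged into one kernel-verified Lean document; each statement's English description precedes it below -/
import Mathlib

section
/- Fix $e\ge2$. Let $\mu=(2^x,1^y)$ be a partition of $n$ with at most two columns, and write $y=me-1+j$ with $m\ge0$ and $0\le j<e$. Let $\mathtt s$ be a standard $\mu$-tableau. If $y\ge e-1$, let $a\in[0,n]$ be maximal with $\pi_{\mathtt s}(a)=me-1$, and let $\mathtt t$ be the standard tableau whose path is obtained from $\pi_{\mathtt s}$ by reflecting $\pi_{\mathtt s}$ on $(a,n]$ in the point $me-1$ (i.e. $b\mapsto2(me-1)-\pi_{\mathtt s}(b)$). Then the preimage $\operatorname{reg}_e^{-1}(\mathtt s)$ equals: the empty set if $\mathtt s$ is not $e$-regular; $\{\mathtt s\}$ if $\mathtt s$ is $e$-regular and either $y<e$ or $j=0$; and $\{\mathtt s,\mathtt t\}$ if $\mathtt s$ is $e$-regular, $y\ge e$ and $j>0$. Moreover, if $y\ge e-1$ then $\operatorname{Shape}(\mathtt t)=(2^{x+j},1^{me-1-j})$. -/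
open scoped Classical
noncomputable section

def isWall (e x : ℤ) : Prop := 0 < x + 1 ∧ (x + 1) % e = 0

def degStep (e u v : ℤ) : ℤ :=
  if isWall e u ∧ v < u then 1
  else if isWall e v ∧ v < u then -1
  else 0

def pathDeg (e : ℤ) (π : ℕ → ℤ) (r s : ℕ) : ℤ :=
  ∑ a ∈ Finset.Ico r s, degStep e (π a) (π (a + 1))

/-- A nonnegative `±1`-path on the interval `[u,v]`. -/
def IsPathOn (π : ℕ → ℤ) (u v : ℕ) : Prop :=
  (∀ a, u ≤ a → a ≤ v → 0 ≤ π a) ∧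
  (∀ a, u ≤ a → a < v → π (a + 1) = π a + 1 ∨ π (a + 1) = π a - 1)

/-- `π[r,s]` is a positive arc (within `[u,v]`). -/
def IsPosArc (e : ℤ) (π : ℕ → ℤ) (u v r s : ℕ) : Prop :=
  u ≤ r ∧ r < s ∧ s ≤ v ∧ isWall e (π r) ∧ π s = π r ∧
    ∀ c, r < c → c < s → π r < π c ∧ π c < π r + e

/-- `π[r,s]` is a negative arc (within `[u,v]`). -/
def IsNegArc (e : ℤ) (π : ℕ → ℤ) (u v r s : ℕ) : Prop :=
  u ≤ r ∧ r < s ∧ s ≤ v ∧ isWall e (π r) ∧ π s = π r ∧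
    ∀ c, r < c → c < s → π r - e < π c ∧ π c < π r

def posArcs (e : ℤ) (π : ℕ → ℤ) (u v : ℕ) : Set (ℕ × ℕ) :=
  {p | IsPosArc e π u v p.1 p.2}

def negArcs (e : ℤ) (π : ℕ → ℤ) (u v : ℕ) : Set (ℕ × ℕ) :=
  {p | IsNegArc e π u v p.1 p.2}


def wallTimes (f : ℤ) (n : ℕ) (π : ℕ → ℤ) : Finset ℕ :=
  (Finset.range (n + 1)).filter fun a => isWall f (π a)

/-- The regularisation map on paths: reflect the tail after the last wall
visit upward in the wall, if the endpoint lies strictly below that wall. -/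
def regPath (f : ℤ) (n : ℕ) (π : ℕ → ℤ) : ℕ → ℤ :=
  if h : (wallTimes f n π).Nonempty then
    let a := (wallTimes f n π).max' h
    if π n < π a then (fun b => if b ≤ a then π b else 2 * π a - π b) else π
  else π

/-- A standard tableau of size `n` (0-based nodes): injective, image is a
Young diagram (downward closed), entries increase along rows and columns. -/
def IsStdTab (n : ℕ) (t : Fin n → ℕ × ℕ) : Prop :=
  Function.Injective t ∧
  (∀ r : Fin n, ∀ a b : ℕ, a ≤ (t r).1 → b ≤ (t r).2 → ∃ r' : Fin n, t r' = (a, b)) ∧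
  (∀ r s : Fin n, (t r).1 ≤ (t s).1 → (t r).2 ≤ (t s).2 → r ≤ s)

/-- Number of entries among the first `a` entries lying in column `j`. -/
def cntCol (n : ℕ) (t : Fin n → ℕ × ℕ) (a j : ℕ) : ℕ :=
  (Finset.univ.filter fun r : Fin n => (r : ℕ) < a ∧ (t r).2 = j).card

/-- The type-`A₁` path attached to a two-column tableau. -/
def pth (n : ℕ) (t : Fin n → ℕ × ℕ) (a : ℕ) : ℤ :=
  (cntCol n t a 0 : ℤ) - (cntCol n t a 1 : ℤ)

/-- Membership in the Young diagram of `(2^x, 1^y)` (0-based). -/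
def memShape2 (x y : ℕ) (v : ℕ × ℕ) : Prop :=
  (v.1 < x ∧ v.2 < 2) ∨ (x ≤ v.1 ∧ v.1 < x + y ∧ v.2 = 0)

/-- The residue of a node (0-based): column minus row, mod `e`. -/
def resNode (e : ℕ) (v : ℕ × ℕ) : ZMod e := (v.2 : ZMod e) - (v.1 : ZMod e)

open Finset in
lemma wallTimes_mem {f : ℤ} {n : ℕ} {π : ℕ → ℤ} {b : ℕ} :
    b ∈ wallTimes f n π ↔ b ≤ n ∧ isWall f (π b) := by
  simp [wallTimes, Nat.lt_succ_iff]

lemma isWall_iff {e x : ℤ} : isWall e x ↔ 0 < x + 1 ∧ e ∣ (x + 1) := by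
  unfold isWall
  refine and_congr_right fun _ => ⟨Int.dvd_of_emod_eq_zero, Int.emod_eq_zero_of_dvd⟩

open Finset in
lemma cntCol_succ {n : ℕ} (u : Fin n → ℕ × ℕ) (b : ℕ) (hb : b < n) (c : ℕ) :
    cntCol n u (b+1) c = cntCol n u b c + (if (u ⟨b, hb⟩).2 = c then 1 else 0) := by
  unfold cntCol
  have hsplit : (univ.filter fun r : Fin n => (r : ℕ) < b + 1 ∧ (u r).2 = c)
      = (univ.filter fun r : Fin n => (r : ℕ) < b ∧ (u r).2 = c)
        ∪ (univ.filter fun r : Fin n => (r : ℕ) = b ∧ (u r).2 = c) := by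
    ext r
    simp only [mem_filter, mem_union, mem_univ, true_and]
    constructor
    · rintro ⟨h1, h2⟩
      rcases Nat.lt_succ_iff_lt_or_eq.mp h1 with h | h
      · exact Or.inl ⟨h, h2⟩
      · exact Or.inr ⟨h, h2⟩
    · rintro (⟨h1, h2⟩ | ⟨h1, h2⟩) <;> exact ⟨by omega, h2⟩
  have hdisj : Disjoint (univ.filter fun r : Fin n => (r : ℕ) < b ∧ (u r).2 = c)
      (univ.filter fun r : Fin n => (r : ℕ) = b ∧ (u r).2 = c) := by
    rw [Finset.disjoint_filter]
    rintro r _ ⟨h1, _⟩ ⟨h2, _⟩; omega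
  have hsingle : (univ.filter fun r : Fin n => (r : ℕ) = b ∧ (u r).2 = c)
      = if (u ⟨b, hb⟩).2 = c then {(⟨b, hb⟩ : Fin n)} else ∅ := by
    split_ifs with h
    · ext r
      simp only [mem_filter, mem_univ, true_and, mem_singleton]
      constructor
      · rintro ⟨h1, _⟩; exact Fin.val_injective h1
      · rintro rfl; exact ⟨rfl, h⟩
    · ext r
      simp only [mem_filter, mem_univ, true_and, Finset.notMem_empty, iff_false]
      rintro ⟨h1, h2⟩
      obtain rfl : r = ⟨b, hb⟩ := Fin.val_injective h1
      exact h h2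
  rw [hsplit, card_union_of_disjoint hdisj, hsingle]
  split_ifs <;> simp

open Finset in
lemma cntCol_of_ge {n : ℕ} (u : Fin n → ℕ × ℕ) {b : ℕ} (hb : n ≤ b) (c : ℕ) :
    cntCol n u b c = cntCol n u n c := by
  unfold cntCol
  congr 1
  apply filter_congr
  intro r _
  have := r.isLt
  constructor
  · rintro ⟨_, h⟩; exact ⟨r.isLt, h⟩
  · rintro ⟨_, h⟩; exact ⟨by omega, h⟩

open Finset in
lemma cntCol_mono {n : ℕ} (u : Fin n → ℕ × ℕ) {b b' : ℕ} (h : b ≤ b') (c : ℕ) :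
    cntCol n u b c ≤ cntCol n u b' c := by
  apply card_le_card
  intro r hr
  simp only [mem_filter, mem_univ, true_and] at *
  exact ⟨by omega, hr.2⟩

open Finset in
lemma cntCol_sum {n : ℕ} (u : Fin n → ℕ × ℕ) (hu2 : ∀ i, (u i).2 < 2) {b : ℕ} (hb : b ≤ n) :
    cntCol n u b 0 + cntCol n u b 1 = b := by
  unfold cntCol
  rw [← card_union_of_disjoint]
  · have : (univ.filter fun r : Fin n => (r : ℕ) < b ∧ (u r).2 = 0)
        ∪ (univ.filter fun r : Fin n => (r : ℕ) < b ∧ (u r).2 = 1)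
        = univ.filter fun r : Fin n => (r : ℕ) < b := by
      ext r
      simp only [mem_union, mem_filter, mem_univ, true_and]
      have := hu2 r
      constructor
      · rintro (⟨h, _⟩ | ⟨h, _⟩) <;> exact h
      · intro h; omega
    rw [this]
    have : (univ.filter fun r : Fin n => (r : ℕ) < b).card
        = ((range n).filter fun i => i < b).card := by
      apply card_bij (fun (r : Fin n) _ => (r : ℕ))
      · intro r hr; simp only [mem_filter, mem_univ, true_and] at hr
        simp [mem_filter, mem_range, r.isLt, hr]
      · intro r _ r' _ h; exact Fin.ext h
      · intro i hi
        simp only [mem_filter, mem_range] at hi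
        exact ⟨⟨i, hi.1⟩, by simp [hi.2], rfl⟩
    rw [this]
    have : (range n).filter (fun i => i < b) = range b := by
      ext i; simp only [mem_filter, mem_range]; omega
    rw [this, card_range]
  · rw [Finset.disjoint_filter]
    rintro r _ ⟨_, h0⟩ ⟨_, h1⟩; omega
lemma pth_of_ge {n : ℕ} (u : Fin n → ℕ × ℕ) {b : ℕ} (hb : n ≤ b) :
    pth n u b = pth n u n := by
  unfold pth; rw [cntCol_of_ge u hb, cntCol_of_ge u hb]

lemma pth_zero {n : ℕ} (u : Fin n → ℕ × ℕ) : pth n u 0 = 0 := by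
  unfold pth cntCol
  simp

lemma pth_step_le {n : ℕ} (u : Fin n → ℕ × ℕ) (b : ℕ) :
    pth n u (b+1) ≤ pth n u b + 1 := by
  by_cases hb : b < n
  · unfold pth
    rw [cntCol_succ u b hb 0, cntCol_succ u b hb 1]
    split_ifs <;> push_cast <;> omega
  · push_neg at hb
    rw [pth_of_ge u hb, pth_of_ge u (by omega)]
    omega

open Finset in
lemma pth_nonneg {n : ℕ} (u : Fin n → ℕ × ℕ) (hu : IsStdTab n u) (b : ℕ) :
    0 ≤ pth n u b := by
  obtain ⟨hinj, hclos, hord⟩ := hu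
  unfold pth
  rw [sub_nonneg, Nat.cast_le]
  unfold cntCol
  have hf : ∀ r : Fin n, ∃ r' : Fin n, u r' = ((u r).1, 0) := fun r =>
    hclos r (u r).1 0 le_rfl (Nat.zero_le _)
  set f : Fin n → Fin n := fun r => Classical.choose (hf r) with hfdef
  have hfspec : ∀ r, u (f r) = ((u r).1, 0) := fun r => Classical.choose_spec (hf r)
  apply card_le_card_of_injOn f
  · intro r hr
    simp only [mem_coe, mem_filter, mem_univ, true_and] at hr ⊢
    have h1 : (u (f r)).1 = (u r).1 := by rw [hfspec r]
    have h2 : (u (f r)).2 = 0 := by rw [hfspec r]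
    have : f r ≤ r := hord (f r) r (le_of_eq h1) (by omega)
    exact ⟨by omega, h2⟩
  · intro r1 h1 r2 h2 hfe
    simp only [mem_coe, mem_filter, mem_univ, true_and] at h1 h2
    apply hinj
    have := (hfspec r1).symm.trans (hfe ▸ hfspec r2)
    have hv1 : (u r1).1 = (u r2).1 := by
      have := congrArg Prod.fst this; simpa using this
    ext
    · exact hv1
    · rw [h1.2, h2.2]

open Finset in
lemma row_eq_cnt {n : ℕ} (u : Fin n → ℕ × ℕ) (hu : IsStdTab n u) (r : Fin n) :
    (u r).1 = cntCol n u r ((u r).2) := by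
  obtain ⟨hinj, hclos, hord⟩ := hu
  unfold cntCol
  rw [← card_range (u r).1]
  symm
  apply card_bij (fun (r' : Fin n) _ => (u r').1)
  · intro r' hr'
    simp only [mem_filter, mem_univ, true_and] at hr'
    simp only [mem_range]
    by_contra hge
    push_neg at hge
    have : r ≤ r' := hord r r' hge (le_of_eq hr'.2.symm)
    omega
  · intro r1 h1 r2 h2 hre
    simp only [mem_filter, mem_univ, true_and] at h1 h2
    apply hinj
    ext
    · exact hre
    · rw [h1.2, h2.2]
  · intro ρ hρ
    simp only [mem_range] at hρ
    obtain ⟨r'', hr''⟩ := hclos r ρ (u r).2 (by omega) le_rfl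
    refine ⟨r'', ?_, by rw [hr'']⟩
    simp only [mem_filter, mem_univ, true_and]
    have h1 : (u r'').1 = ρ := by rw [hr'']
    have h2 : (u r'').2 = (u r).2 := by rw [hr'']
    have hle : r'' ≤ r := hord r'' r (by omega) (le_of_eq h2)
    have hne : r'' ≠ r := by
      intro hEq
      rw [hEq] at h1
      omega
    exact ⟨by
      have : r'' < r := lt_of_le_of_ne hle hne
      exact this, h2⟩

lemma pth_inj {n : ℕ} (u v : Fin n → ℕ × ℕ) (hu : IsStdTab n u) (hu2 : ∀ i, (u i).2 < 2)
    (hv : IsStdTab n v) (hv2 : ∀ i, (v i).2 < 2)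
    (h : ∀ b, pth n u b = pth n v b) : u = v := by
  have hcnt : ∀ b, b ≤ n → ∀ c, c < 2 → cntCol n u b c = cntCol n v b c := by
    intro b hb c hc
    have hsu := cntCol_sum u hu2 hb
    have hsv := cntCol_sum v hv2 hb
    have hd := h b
    unfold pth at hd
    interval_cases c <;> omega
  have hcol : ∀ (b : ℕ) (hb : b < n), (u ⟨b, hb⟩).2 = (v ⟨b, hb⟩).2 := by
    intro b hb
    have e1 := cntCol_succ u b hb 0
    have e2 := cntCol_succ v b hb 0
    have c1 := hcnt b (by omega) 0 (by omega)
    have c2 := hcnt (b+1) (by omega) 0 (by omega)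
    have := hu2 ⟨b, hb⟩
    have := hv2 ⟨b, hb⟩
    split_ifs at e1 e2 <;> omega
  funext i
  have hci : (u i).2 = (v i).2 := by
    have := hcol i.1 i.2
    simpa using this
  have hri : (u i).1 = (v i).1 := by
    rw [row_eq_cnt u hu i, row_eq_cnt v hv i, hci]
    exact hcnt i.1 (le_of_lt i.2) _ (hci ▸ hv2 i)
  exact Prod.ext hri hci

lemma ivt (π : ℕ → ℤ) (hstep : ∀ b, π (b+1) ≤ π b + 1) (c : ℤ) :
    ∀ lo hi, lo ≤ hi → π lo ≤ c → c ≤ π hi → ∃ k, lo ≤ k ∧ k ≤ hi ∧ π k = c := by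
  intro lo hi hle
  induction hi, hle using Nat.le_induction with
  | base => intro h1 h2; exact ⟨lo, le_rfl, le_rfl, le_antisymm h1 h2⟩
  | succ hi hle ih =>
    intro h1 h2
    by_cases hc : c ≤ π hi
    · obtain ⟨k, hk1, hk2, hk3⟩ := ih h1 hc
      exact ⟨k, hk1, by omega, hk3⟩
    · push_neg at hc
      have := hstep hi
      refine ⟨hi + 1, by omega, le_rfl, by omega⟩
lemma regPath_reflect {f : ℤ} {n : ℕ} {π : ℕ → ℤ} {A : ℕ}
    (h1 : A ∈ wallTimes f n π) (h2 : ∀ b ∈ wallTimes f n π, b ≤ A) (h3 : π n < π A) :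
    regPath f n π = fun b => if b ≤ A then π b else 2 * π A - π b := by
  have hne : (wallTimes f n π).Nonempty := ⟨A, h1⟩
  have hmax : (wallTimes f n π).max' hne = A :=
    le_antisymm (Finset.max'_le _ _ _ h2) (Finset.le_max' _ _ h1)
  have hstep : regPath f n π
      = if π n < π ((wallTimes f n π).max' hne)
        then (fun b => if b ≤ (wallTimes f n π).max' hne then π b
          else 2 * π ((wallTimes f n π).max' hne) - π b) else π := by
    unfold regPath
    rw [dif_pos hne]
  rw [hmax] at hstep
  rw [hstep, if_pos h3]

lemma regPath_noreflect {f : ℤ} {n : ℕ} {π : ℕ → ℤ} {A : ℕ}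
    (h1 : A ∈ wallTimes f n π) (h2 : ∀ b ∈ wallTimes f n π, b ≤ A) (h3 : ¬ (π n < π A)) :
    regPath f n π = π := by
  have hne : (wallTimes f n π).Nonempty := ⟨A, h1⟩
  have hmax : (wallTimes f n π).max' hne = A :=
    le_antisymm (Finset.max'_le _ _ _ h2) (Finset.le_max' _ _ h1)
  have hstep : regPath f n π
      = if π n < π ((wallTimes f n π).max' hne)
        then (fun b => if b ≤ (wallTimes f n π).max' hne then π b
          else 2 * π ((wallTimes f n π).max' hne) - π b) else π := by
    unfold regPath
    rw [dif_pos hne]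
  rw [hmax] at hstep
  rw [hstep, if_neg h3]

lemma regPath_of_empty {f : ℤ} {n : ℕ} {π : ℕ → ℤ} (h : ¬ (wallTimes f n π).Nonempty) :
    regPath f n π = π := by
  unfold regPath
  rw [dif_neg h]

/-- Case analysis for `regPath π = ρ` when `π` is a nonnegative path. -/
lemma regPath_cases {e : ℕ} (he : 2 ≤ e) {n : ℕ} {π ρ : ℕ → ℤ}
    (hπ : ∀ b, 0 ≤ π b) (h : regPath (e : ℤ) n π = ρ) :
    π = ρ ∨ ∃ A, A < n ∧ isWall (e : ℤ) (π A) ∧ π n < π A ∧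
      (∀ b, b ≤ A → ρ b = π b) ∧ (∀ b, A < b → ρ b = 2 * π A - π b) ∧
      (∀ b, A < b → b ≤ n → ¬ isWall (e : ℤ) (ρ b)) := by
  by_cases hne : (wallTimes (e : ℤ) n π).Nonempty
  · set A := (wallTimes (e : ℤ) n π).max' hne with hA
    have hmem : A ∈ wallTimes (e : ℤ) n π := Finset.max'_mem _ hne
    have hub : ∀ b ∈ wallTimes (e : ℤ) n π, b ≤ A := fun b hb => Finset.le_max' _ _ hb
    obtain ⟨hAn, hAw⟩ := wallTimes_mem.mp hmem
    by_cases hlt : π n < π A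
    · right
      have hrfl := regPath_reflect hmem hub hlt
      rw [h] at hrfl
      refine ⟨A, ?_, hAw, hlt, ?_, ?_, ?_⟩
      · rcases lt_or_eq_of_le hAn with h' | h'
        · exact h'
        · rw [h'] at hlt; omega
      · intro b hb; rw [hrfl]; simp [hb]
      · intro b hb; rw [hrfl]; simp [Nat.not_le.mpr hb]
      · intro b hb hbn hw
        have hρb : ρ b = 2 * π A - π b := by rw [hrfl]; simp [Nat.not_le.mpr hb]
        obtain ⟨hw1, hw2⟩ := isWall_iff.mp hw
        obtain ⟨hA1, hA2⟩ := isWall_iff.mp hAw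
        have hdvd : (e : ℤ) ∣ (π b + 1) := by
          have : π b + 1 = 2 * (π A + 1) - (ρ b + 1) := by rw [hρb]; ring
          rw [this]
          exact dvd_sub (Dvd.dvd.mul_left hA2 2) hw2
        have hwb : isWall (e : ℤ) (π b) := isWall_iff.mpr ⟨by have := hπ b; omega, hdvd⟩
        have := hub b (wallTimes_mem.mpr ⟨hbn, hwb⟩)
        omega
    · left
      rw [← h, regPath_noreflect hmem hub hlt]
  · left
    rw [← h, regPath_of_empty hne]

/-- `regPath` is idempotent on nonnegative paths. -/
lemma regPath_fixed {e : ℕ} (he : 2 ≤ e) {n : ℕ} {π : ℕ → ℤ} (hπ : ∀ b, 0 ≤ π b) :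
    regPath (e : ℤ) n (regPath (e : ℤ) n π) = regPath (e : ℤ) n π := by
  rcases regPath_cases he hπ (rfl : regPath (e : ℤ) n π = regPath (e : ℤ) n π) with
    h | ⟨A, hAn, hAw, hlt, hle, hgt, hnw⟩
  · rw [← h]; exact h.symm
  · set ρ := regPath (e : ℤ) n π with hρ
    have hρA : ρ A = π A := hle A le_rfl
    have hmem : A ∈ wallTimes (e : ℤ) n ρ := wallTimes_mem.mpr ⟨by omega, hρA ▸ hAw⟩
    have hub : ∀ b ∈ wallTimes (e : ℤ) n ρ, b ≤ A := by
      intro b hb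
      obtain ⟨hbn, hbw⟩ := wallTimes_mem.mp hb
      by_contra hgt'
      push_neg at hgt'
      exact hnw b hgt' hbn hbw
    apply regPath_noreflect hmem hub
    have : ρ n = 2 * π A - π n := hgt n hAn
    rw [this, hρA]
    omega
open Finset in
lemma cnt_of_shape {n x y : ℕ} (hn : n = 2 * x + y) (s : Fin n → ℕ × ℕ)
    (hs : IsStdTab n s) (hssh : ∀ i, memShape2 x y (s i)) :
    cntCol n s n 0 = x + y ∧ cntCol n s n 1 = x := by
  classical
  set S : Finset (ℕ × ℕ) :=
    (range (x + y)) ×ˢ ({0} : Finset ℕ) ∪ (range x) ×ˢ ({1} : Finset ℕ) with hS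
  have hmem : ∀ v : ℕ × ℕ, memShape2 x y v ↔ v ∈ S := by
    rintro ⟨p, q⟩
    simp only [hS, memShape2, mem_union, mem_product, mem_range, mem_singleton]
    omega
  have hdisj : Disjoint ((range (x + y)) ×ˢ ({0} : Finset ℕ))
      ((range x) ×ˢ ({1} : Finset ℕ)) := by
    rw [Finset.disjoint_left]
    rintro ⟨p, q⟩ h1 h2
    simp only [mem_product, mem_singleton] at h1 h2
    omega
  have hcardS : S.card = n := by
    rw [hS, card_union_of_disjoint hdisj]
    simp [hn]; ring
  have himg : Finset.image s univ = S := by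
    apply Finset.eq_of_subset_of_card_le
    · intro v hv
      simp only [Finset.mem_image, mem_univ, true_and] at hv
      obtain ⟨i, rfl⟩ := hv
      exact (hmem _).mp (hssh i)
    · rw [hcardS, Finset.card_image_of_injective _ hs.1, card_univ, Fintype.card_fin]
  have key : ∀ c : ℕ, cntCol n s n c = (S.filter fun v => v.2 = c).card := by
    intro c
    unfold cntCol
    have h1 : (univ.filter fun r : Fin n => (r : ℕ) < n ∧ (s r).2 = c)
        = univ.filter fun r : Fin n => (s r).2 = c := by
      apply filter_congr
      intro r _
      simp [r.isLt]
    rw [h1, ← himg]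
    rw [← Finset.card_image_of_injective (univ.filter fun r : Fin n => (s r).2 = c) hs.1]
    rw [Finset.filter_image]
  constructor
  · rw [key 0]
    have : S.filter (fun v => v.2 = 0) = (range (x + y)) ×ˢ ({0} : Finset ℕ) := by
      ext ⟨p, q⟩
      simp only [hS, mem_filter, mem_union, mem_product, mem_range, mem_singleton]
      omega
    rw [this]; simp
  · rw [key 1]
    have : S.filter (fun v => v.2 = 1) = (range x) ×ˢ ({1} : Finset ℕ) := by
      ext ⟨p, q⟩
      simp only [hS, mem_filter, mem_union, mem_product, mem_range, mem_singleton]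
      omega
    rw [this]; simp

/-- If a path is fixed by `regPath` then its endpoint is at least the value at
any wall time. -/
lemma fixed_endpoint {f : ℤ} {n : ℕ} {π : ℕ → ℤ} (h : regPath f n π = π)
    {b : ℕ} (hb : b ∈ wallTimes f n π) :
    π ((wallTimes f n π).max' ⟨b, hb⟩) ≤ π n := by
  set A := (wallTimes f n π).max' ⟨b, hb⟩ with hA
  by_contra hlt
  push_neg at hlt
  have hmem : A ∈ wallTimes f n π := Finset.max'_mem _ _
  have hub : ∀ c ∈ wallTimes f n π, c ≤ A := fun c hc => Finset.le_max' _ _ hc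
  have hrfl := regPath_reflect hmem hub hlt
  rw [h] at hrfl
  have hAn : A ≤ n := (wallTimes_mem.mp hmem).1
  have hAn' : A ≠ n := by intro h'; rw [h'] at hlt; omega
  have := congrFun hrfl.symm n
  simp only [if_neg (by omega : ¬ n ≤ A)] at this
  omega
theorem stmt10 (e : ℕ) (he : 2 ≤ e) (x y m j n : ℕ)
    (hn : n = 2 * x + y) (hj : j < e) (hy : y + 1 = m * e + j)
    (s : Fin n → ℕ × ℕ) (hs : IsStdTab n s) (hssh : ∀ i, memShape2 x y (s i))
    (a : ℕ) (t : Fin n → ℕ × ℕ)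
    (ha : e - 1 ≤ y →
      (a ≤ n ∧ pth n s a = (m * e : ℤ) - 1 ∧
        ∀ b, a < b → b ≤ n → pth n s b ≠ (m * e : ℤ) - 1))
    (ht : e - 1 ≤ y →
      (IsStdTab n t ∧ (∀ i, (t i).2 < 2) ∧
        ∀ b, pth n t b =
          if b ≤ a then pth n s b else 2 * ((m * e : ℤ) - 1) - pth n s b)) :
    (∀ u : Fin n → ℕ × ℕ, IsStdTab n u → (∀ i, (u i).2 < 2) →
      ((regPath (e : ℤ) n (pth n s) ≠ pth n s →
          regPath (e : ℤ) n (pth n u) ≠ pth n s) ∧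
       (regPath (e : ℤ) n (pth n s) = pth n s → (y < e ∨ j = 0) →
          (regPath (e : ℤ) n (pth n u) = pth n s ↔ u = s)) ∧
       (regPath (e : ℤ) n (pth n s) = pth n s → e ≤ y → 0 < j →
          (regPath (e : ℤ) n (pth n u) = pth n s ↔ (u = s ∨ u = t))))) ∧
    (e - 1 ≤ y → ∃ d : ℕ, d + 1 + j = m * e ∧ ∀ i, memShape2 (x + j) d (t i)) := by
  -- basic setup
  set M : ℕ := m * e with hMdef
  have hMZ : ((m : ℤ) * (e : ℤ)) = ((M : ℕ) : ℤ) := by rw [hMdef]; push_cast; ring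
  rw [hMZ] at ha ht
  have heZ : (0 : ℤ) < (e : ℤ) := by exact_mod_cast (by omega : 0 < e)
  have hedvdM : (e : ℤ) ∣ (M : ℤ) := by
    refine ⟨(m : ℤ), ?_⟩; rw [← hMZ]; ring
  have hs2 : ∀ i, (s i).2 < 2 := by
    intro i; rcases hssh i with ⟨_, h⟩ | ⟨_, _, h⟩ <;> omega
  have hπsn : pth n s n = (y : ℤ) := by
    obtain ⟨h0, h1⟩ := cnt_of_shape hn s hs hssh
    unfold pth; rw [h0, h1]; push_cast; ring
  -- common facts when e - 1 ≤ y
  have hMpos : e - 1 ≤ y → 1 ≤ M := by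
    intro hey
    by_contra h0
    have : M = 0 := by omega
    omega
  have hwall_me : e - 1 ≤ y → isWall (e : ℤ) ((M : ℤ) - 1) := by
    intro hey
    have := hMpos hey
    refine isWall_iff.mpr ⟨by push_cast; omega, by simpa using hedvdM⟩
  constructor
  · intro u hu hu2
    have hunn : ∀ b, 0 ≤ pth n u b := fun b => pth_nonneg u hu b
    refine ⟨?_, ?_, ?_⟩
    -- part 1
    · intro hirr hcon
      apply hirr
      have hfix := regPath_fixed he hunn (n := n) (π := pth n u)
      rw [hcon] at hfix
      exact hfix
    -- part 2
    · intro hreg hcase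
      constructor
      · intro h
        rcases regPath_cases he hunn h with h' | ⟨A, hAn, hAw, hlt, hle, hgt, hnw⟩
        · exact pth_inj u s hu hu2 hs hs2 (fun b => congrFun h' b)
        · exfalso
          have hsA : pth n s A = pth n u A := hle A le_rfl
          have hsn : pth n s n = 2 * pth n u A - pth n u n := hgt n hAn
          obtain ⟨hw1, hw2⟩ := isWall_iff.mp hAw
          have hwge : (e : ℤ) ≤ pth n u A + 1 := Int.le_of_dvd hw1 hw2
          have hun0 : 0 ≤ pth n u n := hunn n
          have hylt : (pth n u A : ℤ) < (y : ℤ) := by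
            rw [hπsn] at hsn; omega
          rcases hcase with hye | hj0
          · have : (e : ℤ) ≤ (y : ℤ) := by omega
            have : e ≤ y := by exact_mod_cast this
            omega
          · -- j = 0 : the endpoint is itself a wall after A
            have hyM : y + 1 = M := by omega
            have hwn : isWall (e : ℤ) (pth n s n) := by
              rw [hπsn]
              refine isWall_iff.mpr ⟨by push_cast; omega, ?_⟩
              have : ((y : ℤ) + 1) = (M : ℤ) := by exact_mod_cast congrArg (Nat.cast : ℕ → ℤ) hyM
              rw [this]; exact hedvdM
            exact hnw n hAn le_rfl hwn
      · rintro rfl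
        exact hreg
    -- part 3
    · intro hreg hey' hj1
      have hey : e - 1 ≤ y := by omega
      obtain ⟨han, hπsa, havoid⟩ := ha hey
      obtain ⟨htstd, ht2, htp⟩ := ht hey
      have hM1 := hMpos hey
      have hMj : j < M := by
        have : e ≤ M := by
          have hm1 : 1 ≤ m := by
            by_contra h0
            have : m = 0 := by omega
            simp [hMdef, this] at hM1
          calc e = 1 * e := (one_mul e).symm
          _ ≤ m * e := Nat.mul_le_mul_right e hm1
        omega
      have hyZ : (y : ℤ) = (M : ℤ) + (j : ℤ) - 1 := by
        have : ((y : ℕ) : ℤ) + 1 = (M : ℤ) + (j : ℤ) := by exact_mod_cast congrArg (Nat.cast : ℕ → ℤ) hy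
        omega
      have hjZ : (0 : ℤ) < (j : ℤ) := by exact_mod_cast hj1
      -- strictly above the wall after a
      have claim1 : ∀ b, a < b → b ≤ n → ((M : ℤ) - 1) < pth n s b := by
        intro b hb hbn
        by_contra hc
        push_neg at hc
        have hne : pth n s b ≠ (M : ℤ) - 1 := havoid b hb hbn
        obtain ⟨k, hk1, hk2, hk3⟩ := ivt (pth n s) (pth_step_le s) ((M : ℤ) - 1) b n hbn
          (by omega) (by rw [hπsn]; omega)
        exact havoid k (by omega) hk2 hk3
      -- no wall visits after a
      have claim2 : ∀ b, a < b → b ≤ n → ¬ isWall (e : ℤ) (pth n s b) := by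
        intro b hb hbn hw
        have hbmem : b ∈ wallTimes (e : ℤ) n (pth n s) := wallTimes_mem.mpr ⟨hbn, hw⟩
        have hA := fixed_endpoint hreg hbmem
        set A := (wallTimes (e : ℤ) n (pth n s)).max' ⟨b, hbmem⟩ with hAdef
        have hAmem : A ∈ wallTimes (e : ℤ) n (pth n s) := Finset.max'_mem _ _
        obtain ⟨hAn, hAw⟩ := wallTimes_mem.mp hAmem
        have hbA : b ≤ A := Finset.le_max' _ _ hbmem
        have h1 := claim1 A (by omega) hAn
        obtain ⟨hw1, hw2⟩ := isWall_iff.mp hAw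
        have hd2 : (e : ℤ) ∣ (pth n s A + 1 - (M : ℤ)) := dvd_sub hw2 hedvdM
        have : (e : ℤ) ≤ pth n s A + 1 - (M : ℤ) := Int.le_of_dvd (by omega) hd2
        rw [hπsn] at hA
        omega
      -- bounded above by the next wall after a
      have claim3 : ∀ b, a < b → b ≤ n → pth n s b < (M : ℤ) - 1 + e := by
        intro b hb hbn
        by_contra hc
        push_neg at hc
        obtain ⟨k, hk1, hk2, hk3⟩ := ivt (pth n s) (pth_step_le s) ((M : ℤ) - 1 + e) a b
          (by omega) (by rw [hπsa]; omega) hc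
        have hka : a < k := by
          rcases lt_or_eq_of_le hk1 with h' | h'
          · exact h'
          · exfalso; rw [← h', hπsa] at hk3; omega
        have hkw : isWall (e : ℤ) (pth n s k) := by
          refine isWall_iff.mpr ⟨by rw [hk3]; push_cast; omega, ?_⟩
          rw [hk3]
          have : (M : ℤ) - 1 + e + 1 = (M : ℤ) + e := by ring
          rw [this]
          exact dvd_add hedvdM dvd_rfl
        exact claim2 k hka (by omega) hkw
      have han' : a < n := by
        rcases lt_or_eq_of_le han with h' | h'
        · exact h'
        · exfalso
          rw [h', hπsn, hyZ] at hπsa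
          omega
      -- the reflected tableau's path regularises back to pth s
      have htpa : pth n t a = (M : ℤ) - 1 := by rw [htp a, if_pos le_rfl, hπsa]
      have tamem : a ∈ wallTimes (e : ℤ) n (pth n t) := by
        refine wallTimes_mem.mpr ⟨han, ?_⟩
        rw [htpa]; exact hwall_me hey
      have twall : ∀ b ∈ wallTimes (e : ℤ) n (pth n t), b ≤ a := by
        intro b hb
        obtain ⟨hbn, hbw⟩ := wallTimes_mem.mp hb
        by_contra hba
        push_neg at hba
        have htpb : pth n t b = 2 * ((M : ℤ) - 1) - pth n s b := by
          rw [htp b, if_neg (by omega)]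
        obtain ⟨hw1, hw2⟩ := isWall_iff.mp hbw
        have hdvd : (e : ℤ) ∣ (pth n s b + 1 - (M : ℤ)) := by
          have heq2 : pth n s b + 1 - (M : ℤ) = (M : ℤ) - (pth n t b + 1) := by
            rw [htpb]; ring
          rw [heq2]
          exact dvd_sub hedvdM hw2
        have h1 := claim1 b hba hbn
        have h3 := claim3 b hba hbn
        have : (e : ℤ) ≤ pth n s b + 1 - (M : ℤ) := Int.le_of_dvd (by omega) hdvd
        omega
      have htn : pth n t n = 2 * ((M : ℤ) - 1) - (y : ℤ) := by
        rw [htp n, if_neg (by omega), hπsn]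
      have hregt : regPath (e : ℤ) n (pth n t) = pth n s := by
        rw [regPath_reflect tamem twall (by rw [htn, htpa]; omega)]
        funext b
        by_cases hb : b ≤ a
        · rw [if_pos hb, htp b, if_pos hb]
        · rw [if_neg hb, htpa, htp b, if_neg hb]
          ring
      constructor
      · intro h
        rcases regPath_cases he hunn h with h' | ⟨A, hAn, hAw, hlt, hle, hgt, hnw⟩
        · exact Or.inl (pth_inj u s hu hu2 hs hs2 (fun b => congrFun h' b))
        · right
          have hsA : pth n s A = pth n u A := hle A le_rfl
          have haA : a ≤ A := by
            by_contra hc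
            push_neg at hc
            have hwa : isWall (e : ℤ) (pth n s a) := by
              rw [hπsa]; exact hwall_me hey
            exact hnw a hc han hwa
          have hAa : A ≤ a := by
            by_contra hc
            push_neg at hc
            exact claim2 A hc (by omega) (hsA ▸ hAw)
          have hAeq : A = a := le_antisymm hAa haA
          subst hAeq
          have huA : pth n u A = (M : ℤ) - 1 := by rw [← hsA, hπsa]
          apply pth_inj u t hu hu2 htstd ht2
          intro b
          by_cases hb : b ≤ A
          · rw [htp b, if_pos hb, ← hle b hb]
          · rw [htp b, if_neg hb]
            have := hgt b (by omega)
            rw [huA] at this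
            omega
      · rintro (rfl | rfl)
        · exact hreg
        · exact hregt
  -- shape of t
  · intro hey
    obtain ⟨han, hπsa, havoid⟩ := ha hey
    obtain ⟨htstd, ht2, htp⟩ := ht hey
    have hM1 := hMpos hey
    have hMj : j < M := by
      have : e ≤ M := by
        have hm1 : 1 ≤ m := by
          by_contra h0
          have : m = 0 := by omega
          simp [hMdef, this] at hM1
        calc e = 1 * e := (one_mul e).symm
        _ ≤ m * e := Nat.mul_le_mul_right e hm1
      omega
    refine ⟨M - 1 - j, by omega, ?_⟩
    set d : ℕ := M - 1 - j with hddef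
    have hdj : d + 1 + j = M := by omega
    have htn : pth n t n = (d : ℤ) := by
      by_cases hna : n ≤ a
      · have hna' : a = n := le_antisymm han hna
        have hyeq : (y : ℤ) = (M : ℤ) - 1 := by
          have h' := hπsa
          rw [hna', hπsn] at h'
          exact h'
        have hj0 : j = 0 := by
          have : (y : ℤ) + 1 = (M : ℤ) + (j : ℤ) := by exact_mod_cast congrArg (Nat.cast : ℕ → ℤ) hy
          omega
        rw [htp n, if_pos hna, hπsn, hyeq]
        have : (d : ℤ) + 1 + (j : ℤ) = (M : ℤ) := by exact_mod_cast congrArg (Nat.cast : ℕ → ℤ) hdj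
        omega
      · rw [htp n, if_neg hna, hπsn]
        have h1 : (y : ℤ) + 1 = (M : ℤ) + (j : ℤ) := by exact_mod_cast congrArg (Nat.cast : ℕ → ℤ) hy
        have h2 : (d : ℤ) + 1 + (j : ℤ) = (M : ℤ) := by exact_mod_cast congrArg (Nat.cast : ℕ → ℤ) hdj
        omega
    have hsum : cntCol n t n 0 + cntCol n t n 1 = n := cntCol_sum t ht2 le_rfl
    have hdiff : (cntCol n t n 0 : ℤ) - (cntCol n t n 1 : ℤ) = (d : ℤ) := by
      rw [← htn]; rfl
    have hc1 : cntCol n t n 1 = x + j ∧ cntCol n t n 0 = x + j + d := by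
      have h2 : (d : ℤ) + 1 + (j : ℤ) = (M : ℤ) := by exact_mod_cast congrArg (Nat.cast : ℕ → ℤ) hdj
      constructor <;> omega
    intro i
    have hrow : (t i).1 < cntCol n t n ((t i).2) := by
      have h1 := row_eq_cnt t htstd i
      have h2 : cntCol n t ((i : ℕ) + 1) ((t i).2)
          = cntCol n t (i : ℕ) ((t i).2) + 1 := by
        have hei : (⟨(i : ℕ), i.isLt⟩ : Fin n) = i := Fin.eta i i.isLt
        rw [cntCol_succ t (i : ℕ) i.isLt ((t i).2), hei, if_pos rfl]
      have h3 := cntCol_mono t (by omega : (i : ℕ) + 1 ≤ n) ((t i).2)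
      omega
    have hci := ht2 i
    rcases (by omega : (t i).2 = 0 ∨ (t i).2 = 1) with hc | hc
    · rw [hc, hc1.2] at hrow
      by_cases hxr : (t i).1 < x + j
      · exact Or.inl ⟨hxr, by omega⟩
      · exact Or.inr ⟨by omega, by omega, hc⟩
    · rw [hc, hc1.1] at hrow
      exact Or.inl ⟨hrow, by omega⟩
end
end

section
/- Fix $e\ge2$ and a prime $p$, and let $b\in\mathbb Z_{\ge0}$. Let $\mathtt t$ be a standard tableau of size $n$ with at most two columns, let $\mathtt s=\operatorname{reg}_{ep^b}(\mathtt t)$, and suppose $b$ is maximal such that $\mathtt s=\operatorname{reg}_{ep^b}(\mathtt t)$. Then for every integer $c>b$, the tableau $\mathtt t$ is $ep^c$-regular if and only if $\mathtt s$ is $ep^c$-regular. -/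
open scoped Classical
noncomputable section

/-!
Write `f = e p^b` and `g = e p^c`, so `f ∣ g` and every `g`-wall is an `f`-wall, and let `π` be
the path of `t`. If `reg_f` fixes `t` then `s = t`. Otherwise the path of `s` is `π` reflected in
the level `π(a)` of its last `f`-wall visit `a`. As `reg_g t ≠ s`, `π(a)` is not a `g`-wall, so
neither path meets a `g`-wall on `[a, n]` and both have the same last `g`-wall visit `a' < a`.
After time `a`, `π` ends strictly between the `f`-walls `π(a) - f` and `π(a)`, the path of `s`
between `π(a)` and `π(a) + f`; since `π(a') ≡ π(a) (mod f)` and `π(a') ≠ π(a)`, both endpoints lie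
on the same side of `π(a')`.
-/

open Function

section Walls

variable {f : ℤ} {n : ℕ} {π : ℕ → ℤ}

lemma isWall_iff_dvd {x : ℤ} : isWall f x ↔ 0 < x + 1 ∧ f ∣ x + 1 := by
  rw [isWall, Int.dvd_iff_emod_eq_zero]

lemma not_isWall_zero (x : ℤ) : ¬ isWall 0 x := by
  rw [isWall_iff_dvd, zero_dvd_iff]
  omega

def IsLastWall (f : ℤ) (n : ℕ) (π : ℕ → ℤ) (a : ℕ) : Prop :=
  a ≤ n ∧ isWall f (π a) ∧ ∀ x, a < x → x ≤ n → ¬ isWall f (π x)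

lemma IsLastWall.unique {a a' : ℕ} (ha : IsLastWall f n π a) (ha' : IsLastWall f n π a') :
    a = a' := by
  by_contra hne
  rcases Nat.lt_or_gt_of_ne hne with h | h
  · exact ha.2.2 a' h ha'.1 ha'.2.1
  · exact ha'.2.2 a h ha.1 ha.2.1

lemma isLastWall_max' (h : (wallTimes f n π).Nonempty) :
    IsLastWall f n π ((wallTimes f n π).max' h) := by
  have hmem := Finset.mem_filter.1 ((wallTimes f n π).max'_mem h)
  refine ⟨Nat.lt_succ_iff.1 (Finset.mem_range.1 hmem.1), hmem.2, fun x hx hxn hw => ?_⟩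
  have := (wallTimes f n π).le_max' x
    (Finset.mem_filter.2 ⟨Finset.mem_range.2 (Nat.lt_succ_of_le hxn), hw⟩)
  omega

def reflectFrom (π : ℕ → ℤ) (a : ℕ) : ℕ → ℤ :=
  fun x => if x ≤ a then π x else 2 * π a - π x

lemma regPath_of_isLastWall {a : ℕ} (ha : IsLastWall f n π a) :
    regPath f n π = if π n < π a then reflectFrom π a else π := by
  have hne : (wallTimes f n π).Nonempty :=
    ⟨a, Finset.mem_filter.2 ⟨Finset.mem_range.2 (Nat.lt_succ_of_le ha.1), ha.2.1⟩⟩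
  obtain rfl := (isLastWall_max' hne).unique ha
  rw [regPath, dif_pos hne]
  rfl

lemma regPath_of_forall_not_isLastWall (h : ∀ a, ¬ IsLastWall f n π a) : regPath f n π = π :=
  dif_neg fun hne => h _ (isLastWall_max' hne)

lemma isFixedPt_regPath_iff :
    IsFixedPt (regPath f n) π ↔ ∀ a, IsLastWall f n π a → π a ≤ π n := by
  by_cases hex : ∃ a, IsLastWall f n π a
  · obtain ⟨a, ha⟩ := hex
    have hall : (∀ a', IsLastWall f n π a' → π a' ≤ π n) ↔ π a ≤ π n :=
      ⟨fun h => h a ha, fun h a' ha' => ha.unique ha' ▸ h⟩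
    rw [hall, IsFixedPt, regPath_of_isLastWall ha]
    split_ifs with hlt
    · refine iff_of_false (fun hfix => ?_) hlt.not_ge
      have hna : ¬ n ≤ a := fun h => by rw [le_antisymm h ha.1] at hlt; exact hlt.false
      have hn := congrFun hfix n
      simp only [reflectFrom, if_neg hna] at hn
      omega
    · exact iff_of_true rfl (not_lt.1 hlt)
  · exact iff_of_true (regPath_of_forall_not_isLastWall (not_exists.1 hex))
      fun a ha => (hex ⟨a, ha⟩).elim

lemma exists_isLastWall_of_not_isFixedPt (h : ¬ IsFixedPt (regPath f n) π) :
    ∃ a, IsLastWall f n π a ∧ π n < π a := by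
  simpa [isFixedPt_regPath_iff] using h

lemma isLastWall_congr {σ : ℕ → ℤ} (h : ∀ x ≤ n, isWall f (σ x) ↔ isWall f (π x)) {a : ℕ} :
    IsLastWall f n σ a ↔ IsLastWall f n π a := by
  unfold IsLastWall
  constructor
  · rintro ⟨han, hw, hlast⟩
    exact ⟨han, (h a han).1 hw, fun x hx hxn => (h x hxn).not.1 (hlast x hx hxn)⟩
  · rintro ⟨han, hw, hlast⟩
    exact ⟨han, (h a han).2 hw, fun x hx hxn => (h x hxn).not.2 (hlast x hx hxn)⟩

end Walls

section Reflection

variable {f g : ℤ} {n : ℕ} {π : ℕ → ℤ}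

lemma lt_of_forall_ne_of_sub_one_le {w : ℤ} {a : ℕ}
    (hstep : ∀ x, a ≤ x → x < n → π x - 1 ≤ π (x + 1))
    (hmiss : ∀ x, a < x → x ≤ n → π x ≠ w) (ha : w < π a) :
    ∀ x, a ≤ x → x ≤ n → w < π x := by
  intro x hax
  induction x, hax using Nat.le_induction with
  | base => exact fun _ => ha
  | succ x hax ih =>
    intro hxn
    have := hstep x hax (by omega)
    have := ih (by omega)
    have := hmiss (x + 1) (by omega) hxn
    omega

/-- `π a - f` is the next wall below `π a`, which the path never visits after time `a`. -/
lemma IsLastWall.sub_lt (hπ : IsPathOn π 0 n) (hf : 0 < f) {a : ℕ}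
    (ha : IsLastWall f n π a) : π a - f < π n := by
  refine lt_of_forall_ne_of_sub_one_le (fun x _ hx => ?_) (fun x hax hxn hx => ?_)
    (by omega) n ha.1 le_rfl
  · rcases hπ.2 x (Nat.zero_le x) hx with h | h <;> omega
  · refine ha.2.2 x hax hxn (isWall_iff_dvd.2 ⟨by linarith [hπ.1 x (Nat.zero_le x) hxn], ?_⟩)
    rw [hx, sub_add_eq_add_sub]
    exact dvd_sub (isWall_iff_dvd.1 ha.2.1).2 dvd_rfl

lemma le_iff_le_two_mul_sub_of_dvd {c w y : ℤ} (hw : f ∣ w - c) (hwc : w ≠ c)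
    (hy : c - f < y) (hyc : y < c) : w ≤ y ↔ w ≤ 2 * c - y := by
  obtain ⟨k, hk⟩ := hw
  rcases lt_trichotomy k 0 with hk0 | rfl | hk0
  · have : f * k ≤ -f := by nlinarith
    constructor <;> intro <;> linarith
  · exact absurd (by linarith) hwc
  · have : f ≤ f * k := by nlinarith
    constructor <;> intro <;> linarith

lemma IsLastWall.not_isWall_of_dvd (hfg : f ∣ g) {a : ℕ} (ha : IsLastWall f n π a) {x : ℕ}
    (hax : a < x) (hxn : x ≤ n) : ¬ isWall g (π x) := fun hw =>
  ha.2.2 x hax hxn (isWall_iff_dvd.2 ⟨(isWall_iff_dvd.1 hw).1, hfg.trans (isWall_iff_dvd.1 hw).2⟩)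

/-- Reflection in the `f`-wall level `π a` maps `f`-walls to `f`-walls, so after the last `f`-wall
neither path has a `g`-wall. -/
lemma isWall_reflectFrom_iff (hπ : IsPathOn π 0 n) (hfg : f ∣ g) {a : ℕ}
    (ha : IsLastWall f n π a) : ∀ x ≤ n, isWall g (reflectFrom π a x) ↔ isWall g (π x) := by
  intro x hxn
  by_cases hxa : x ≤ a
  · rw [reflectFrom, if_pos hxa]
  refine iff_of_false (fun hw => ?_) (ha.not_isWall_of_dvd hfg (by omega) hxn)
  rw [reflectFrom, if_neg hxa, isWall_iff_dvd] at hw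
  have hdvd : f ∣ π x + 1 := by
    have := dvd_sub (dvd_mul_of_dvd_right (isWall_iff_dvd.1 ha.2.1).2 2) (hfg.trans hw.2)
    rwa [show 2 * (π a + 1) - (2 * π a - π x + 1) = π x + 1 by ring] at this
  exact ha.2.2 x (by omega) hxn (isWall_iff_dvd.2 ⟨by linarith [hπ.1 x (Nat.zero_le x) hxn], hdvd⟩)

lemma isFixedPt_regPath_reflectFrom_iff (hπ : IsPathOn π 0 n) (hf : 0 < f) (hfg : f ∣ g)
    {a : ℕ} (ha : IsLastWall f n π a) (hlt : π n < π a) (hga : ¬ isWall g (π a)) :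
    IsFixedPt (regPath g n) π ↔ IsFixedPt (regPath g n) (reflectFrom π a) := by
  have hwin := ha.sub_lt hπ hf
  have hna : ¬ n ≤ a := fun h => by rw [le_antisymm h ha.1] at hlt; exact hlt.false
  simp only [isFixedPt_regPath_iff, isLastWall_congr (isWall_reflectFrom_iff hπ hfg ha)]
  refine forall₂_congr fun a' ha' => ?_
  have ha'a : a' < a := lt_of_le_of_ne (not_lt.1 fun h => ha.not_isWall_of_dvd hfg h ha'.1 ha'.2.1)
    (by rintro rfl; exact hga ha'.2.1)
  simp only [reflectFrom, if_pos ha'a.le, if_neg hna]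
  refine le_iff_le_two_mul_sub_of_dvd ?_ (fun h => hga (h ▸ ha'.2.1)) hwin hlt
  have := dvd_sub (hfg.trans (isWall_iff_dvd.1 ha'.2.1).2) (isWall_iff_dvd.1 ha.2.1).2
  rwa [add_sub_add_right_eq_sub] at this

end Reflection

theorem isFixedPt_regPath_iff_of_dvd {f g : ℤ} {n : ℕ} {π : ℕ → ℤ} (hπ : IsPathOn π 0 n)
    (hf : 0 ≤ f) (hfg : f ∣ g) (hne : regPath g n π ≠ regPath f n π) :
    IsFixedPt (regPath g n) π ↔ IsFixedPt (regPath g n) (regPath f n π) := by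
  by_cases hfix : IsFixedPt (regPath f n) π
  · rw [hfix.eq]
  obtain ⟨a, ha, hlt⟩ := exists_isLastWall_of_not_isFixedPt hfix
  have hf : 0 < f := hf.lt_of_ne fun h => not_isWall_zero _ (h ▸ ha.2.1)
  have hga : ¬ isWall g (π a) := fun hw => hne <| by
    rw [regPath_of_isLastWall ha, regPath_of_isLastWall
      ⟨ha.1, hw, fun x hax hxn => ha.not_isWall_of_dvd hfg hax hxn⟩]
  rw [regPath_of_isLastWall ha, if_pos hlt]
  exact isFixedPt_regPath_reflectFrom_iff hπ hf hfg ha hlt hga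

section Tableaux

variable {n : ℕ} {t : Fin n → ℕ × ℕ}

lemma cntCol_succ_s11 (a j : ℕ) (ha : a < n) :
    cntCol n t (a + 1) j = cntCol n t a j + if (t ⟨a, ha⟩).2 = j then 1 else 0 := by
  unfold cntCol
  split_ifs with h
  · rw [← Finset.card_insert_of_notMem (a := (⟨a, ha⟩ : Fin n)) (by simp)]
    congr 1
    ext r
    simp only [Finset.mem_filter, Finset.mem_univ, true_and, Finset.mem_insert, Fin.ext_iff]
    constructor
    · rintro ⟨hr, hrj⟩
      rcases Nat.lt_succ_iff_lt_or_eq.1 hr with hr | hr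
      · exact Or.inr ⟨hr, hrj⟩
      · exact Or.inl hr
    · rintro (hr | ⟨hr, hrj⟩)
      · obtain rfl : r = ⟨a, ha⟩ := Fin.ext hr
        exact ⟨by simp, h⟩
      · exact ⟨by omega, hrj⟩
  · rw [add_zero]
    congr 1
    ext r
    simp only [Finset.mem_filter, Finset.mem_univ, true_and]
    refine ⟨fun ⟨hr, hrj⟩ => ⟨lt_of_le_of_ne (Nat.lt_succ_iff.1 hr) fun hra => ?_, hrj⟩,
      fun ⟨hr, hrj⟩ => ⟨by omega, hrj⟩⟩
    obtain rfl : r = ⟨a, ha⟩ := Fin.ext hra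
    exact h hrj

/-- Every box in the second column has its left neighbour, an earlier entry, in the first. -/
lemma cntCol_one_le_cntCol_zero (ht : IsStdTab n t) (a : ℕ) : cntCol n t a 1 ≤ cntCol n t a 0 := by
  obtain ⟨hinj, hcl, hord⟩ := ht
  choose left hleft using fun r => hcl r (t r).1 0 le_rfl (Nat.zero_le _)
  refine Finset.card_le_card_of_injOn left (fun r hr => ?_) fun r₁ hr₁ r₂ hr₂ h => hinj ?_
  · simp only [Finset.coe_filter, Finset.mem_univ, true_and, Set.mem_ofPred_eq] at hr ⊢
    have : left r ≤ r := hord _ _ (by rw [hleft]) (by rw [hleft]; exact Nat.zero_le _)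
    exact ⟨lt_of_le_of_lt this hr.1, by rw [hleft]⟩
  · simp only [Finset.coe_filter, Finset.mem_univ, true_and, Set.mem_ofPred_eq] at hr₁ hr₂
    have := congrArg Prod.fst ((hleft r₁).symm.trans (h ▸ hleft r₂))
    exact Prod.ext this (hr₁.2.trans hr₂.2.symm)

lemma isPathOn_pth (ht : IsStdTab n t) (ht2 : ∀ i, (t i).2 < 2) : IsPathOn (pth n t) 0 n := by
  refine ⟨fun a _ _ => ?_, fun a _ ha => ?_⟩
  · have := cntCol_one_le_cntCol_zero ht a
    unfold pth
    omega
  · have := ht2 ⟨a, ha⟩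
    unfold pth
    rw [cntCol_succ_s11 a 0 ha, cntCol_succ_s11 a 1 ha]
    split_ifs <;> omega

end Tableaux

theorem stmt11_general (e p : ℕ) (b n : ℕ)
    (t s : Fin n → ℕ × ℕ)
    (ht : IsStdTab n t) (ht2 : ∀ i, (t i).2 < 2)
    (hreg : pth n s = regPath ((e : ℤ) * (p : ℤ) ^ b) n (pth n t))
    (hmax : ∀ c, b < c → regPath ((e : ℤ) * (p : ℤ) ^ c) n (pth n t) ≠ pth n s)
    (c : ℕ) (hc : b < c) :
    regPath ((e : ℤ) * (p : ℤ) ^ c) n (pth n t) = pth n t ↔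
      regPath ((e : ℤ) * (p : ℤ) ^ c) n (pth n s) = pth n s := by
  rw [hreg]
  exact isFixedPt_regPath_iff_of_dvd (isPathOn_pth ht ht2) (by positivity)
    (mul_dvd_mul_left _ (pow_dvd_pow _ hc.le)) (hreg ▸ hmax c hc)

theorem stmt11 (e p : ℕ) (he : 2 ≤ e) (hp : p.Prime) (b n : ℕ)
    (t s : Fin n → ℕ × ℕ)
    (ht : IsStdTab n t) (ht2 : ∀ i, (t i).2 < 2)
    (hs : IsStdTab n s) (hs2 : ∀ i, (s i).2 < 2)
    (hreg : pth n s = regPath ((e : ℤ) * (p : ℤ) ^ b) n (pth n t))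
    (hmax : ∀ c, b < c → regPath ((e : ℤ) * (p : ℤ) ^ c) n (pth n t) ≠ pth n s)
    (c : ℕ) (hc : b < c) :
    regPath ((e : ℤ) * (p : ℤ) ^ c) n (pth n t) = pth n t ↔
      regPath ((e : ℤ) * (p : ℤ) ^ c) n (pth n s) = pth n s :=
  stmt11_general e p b n t s ht ht2 hreg hmax c hc
end
end
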